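/- arXiv:2209.07380 — 3 statements merged into one kernel-verified Lean document; each statement's English description precedes it below -/
import Mathlib

section
/- Let f : ℝ → ℝ be continuous, nonnegative, with f(0) = f(1) = 0 and f(s) ≥ (1/C)|s|^q - C for some C > 0, q ≥ 1, and let K > max{f(s) : s ∈ [0,1]}. Define φ(s) := ∫₀ˢ √(2·min{f(t), (1/(1+C))|t|^q + K}) dt. Then φ is continuous, non-decreasing, φ(0)=0, and there are constants c₁, c₂ > 0 such that |φ(s)| ≥ c₁|s|^{(q+2)/2} - c₂ for all s ∈ ℝ. -/
private lemma aux_growth (g : ℝ → ℝ) (hgc : Continuous g) (hg0 : ∀ t, 0 ≤ g t)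
    (r a M : ℝ) (hr : 0 < r) (_ha : 0 < a) (hM : 0 < M)
    (hlb : ∀ t, M ≤ t → a * t ^ r ≤ g t)
    (s : ℝ) (hs : M ≤ s) :
    a * (s ^ (r + 1) - M ^ (r + 1)) / (r + 1) ≤ ∫ t in (0:ℝ)..s, g t := by
  have hint : ∀ a b : ℝ, IntervalIntegrable g MeasureTheory.volume a b :=
    fun a b => hgc.intervalIntegrable a b
  have hcr : Continuous fun t : ℝ => a * t ^ r :=
    continuous_const.mul (continuous_id.rpow_const (fun x => Or.inr hr.le))
  have hsplit : (∫ t in (0:ℝ)..M, g t) + ∫ t in M..s, g t = ∫ t in (0:ℝ)..s, g t :=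
    intervalIntegral.integral_add_adjacent_intervals (hint 0 M) (hint M s)
  have h1 : 0 ≤ ∫ t in (0:ℝ)..M, g t :=
    intervalIntegral.integral_nonneg hM.le (fun t _ => hg0 t)
  have h2 : (∫ t in M..s, a * t ^ r) ≤ ∫ t in M..s, g t :=
    intervalIntegral.integral_mono_on hs (hcr.intervalIntegrable M s) (hint M s)
      (fun t ht => hlb t ht.1)
  have h3 : (∫ t in M..s, a * t ^ r) = a * (s ^ (r + 1) - M ^ (r + 1)) / (r + 1) := by
    rw [intervalIntegral.integral_const_mul, integral_rpow (Or.inl (by linarith))]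
    ring
  linarith

/-- properties of the geodesic-distance function
`φ(s) = ∫₀ˢ √(2 min{f(t), (1/(1+C))|t|^q + K}) dt`: it is continuous,
non-decreasing, vanishes at 0, and grows at least like `|s|^{(q+2)/2}`. -/
theorem stmt_10 (f : ℝ → ℝ) (hf : Continuous f) (hfnn : ∀ s, 0 ≤ f s)
    (hf0 : f 0 = 0) (hf1 : f 1 = 0)
    (C q : ℝ) (hC : 0 < C) (hq : 1 ≤ q)
    (hcoer : ∀ s : ℝ, (1 / C) * |s| ^ q - C ≤ f s)
    (K : ℝ) (hK : ∀ s ∈ Set.Icc (0:ℝ) 1, f s < K)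
    (φ : ℝ → ℝ)
    (hφ : ∀ s : ℝ,
      φ s = ∫ t in (0:ℝ)..s, Real.sqrt (2 * min (f t) ((1 / (1 + C)) * |t| ^ q + K))) :
    Continuous φ ∧ Monotone φ ∧ φ 0 = 0 ∧
      ∃ c₁ c₂ : ℝ, 0 < c₁ ∧ 0 < c₂ ∧
        ∀ s : ℝ, c₁ * |s| ^ ((q + 2) / 2) - c₂ ≤ |φ s| := by
  have hC1 : (0:ℝ) < 1 + C := by linarith
  have hq0 : (0:ℝ) < q := by linarith
  set g : ℝ → ℝ := fun t => Real.sqrt (2 * min (f t) ((1 / (1 + C)) * |t| ^ q + K)) with hgdef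
  have hgc : Continuous g := by
    apply Real.continuous_sqrt.comp
    apply continuous_const.mul
    exact hf.min ((continuous_const.mul
      (continuous_abs.rpow_const (fun x => Or.inr hq0.le))).add continuous_const)
  have hg0 : ∀ t, 0 ≤ g t := fun t => Real.sqrt_nonneg _
  have hint : ∀ a b : ℝ, IntervalIntegrable g MeasureTheory.volume a b :=
    fun a b => hgc.intervalIntegrable a b
  have hφeq : φ = fun s => ∫ t in (0:ℝ)..s, g t := funext hφ
  have hcont : Continuous φ := by
    rw [hφeq]; exact intervalIntegral.continuous_primitive hint 0
  have hmono : Monotone φ := by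
    intro a b hab
    rw [hφeq]
    have hsp := intervalIntegral.integral_add_adjacent_intervals (hint 0 a) (hint a b)
    have h0 : 0 ≤ ∫ t in a..b, g t := intervalIntegral.integral_nonneg hab (fun t _ => hg0 t)
    simp only
    linarith
  have hφ0 : φ 0 = 0 := by rw [hφ]; simp
  refine ⟨hcont, hmono, hφ0, ?_⟩
  have hK0 : 0 < K := hf0 ▸ hK 0 ⟨le_refl 0, zero_le_one⟩
  set M : ℝ := max 1 ((2 * C * (1 + C)) ^ (1 / q)) with hMdef
  have hM1 : (1:ℝ) ≤ M := le_max_left _ _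
  have hM0 : (0:ℝ) < M := lt_of_lt_of_le one_pos hM1
  have hMq : ∀ t : ℝ, M ≤ t → 2 * C * (1 + C) ≤ t ^ q := by
    intro t ht
    have hbase : (0:ℝ) ≤ 2 * C * (1 + C) := by positivity
    have h1 : ((2 * C * (1 + C)) ^ (1 / q)) ^ q ≤ t ^ q :=
      Real.rpow_le_rpow (Real.rpow_nonneg hbase _)
        (le_trans (le_max_right _ _) ht) hq0.le
    rwa [← Real.rpow_mul hbase, one_div_mul_cancel (ne_of_gt hq0), Real.rpow_one] at h1
  have hglb : ∀ t : ℝ, M ≤ |t| → (1 / Real.sqrt (1 + C)) * |t| ^ (q / 2) ≤ g t := by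
    intro t ht
    set x : ℝ := |t| ^ q with hxdef
    have hx0 : 0 ≤ x := Real.rpow_nonneg (abs_nonneg t) q
    have hxbig : 2 * C * (1 + C) ≤ x := hMq |t| ht
    have hfc : x - C * C ≤ C * f t := by
      have h := mul_le_mul_of_nonneg_left (hcoer t) hC.le
      have he : C * ((1 / C) * x - C) = x - C * C := by field_simp
      linarith [he ▸ h]
    have hmin : x / (2 * (1 + C)) ≤ min (f t) ((1 / (1 + C)) * x + K) := by
      apply le_min
      · rw [div_le_iff₀ (by positivity)]
        nlinarith [hfc, hxbig, hC, hC1]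
      · rw [div_le_iff₀ (by positivity)]
        have e : (1 / (1 + C) * x + K) * (2 * (1 + C)) = 2 * x + 2 * K * (1 + C) := by
          field_simp
        rw [e]; nlinarith [hx0, hK0.le, hC1]
    have h2m : x / (1 + C) ≤ 2 * min (f t) ((1 / (1 + C)) * x + K) := by
      have : x / (1 + C) = 2 * (x / (2 * (1 + C))) := by field_simp
      linarith [mul_le_mul_of_nonneg_left hmin (by norm_num : (0:ℝ) ≤ 2)]
    have hsq : Real.sqrt (x / (1 + C)) ≤ g t := Real.sqrt_le_sqrt h2m
    have heq : Real.sqrt (x / (1 + C)) = (1 / Real.sqrt (1 + C)) * |t| ^ (q / 2) := by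
      rw [Real.sqrt_div hx0, hxdef, Real.sqrt_eq_rpow, ← Real.rpow_mul (abs_nonneg t)]
      rw [one_div, div_eq_inv_mul]
      ring_nf
    linarith [heq ▸ hsq]
  set r : ℝ := q / 2 with hrdef
  have hr0 : 0 < r := by positivity
  set a : ℝ := 1 / Real.sqrt (1 + C) with hadef
  have ha0 : 0 < a := by positivity
  refine ⟨a / (r + 1), (a / (r + 1)) * M ^ (r + 1), by positivity,
    by positivity, ?_⟩
  intro s
  have hexp : (q + 2) / 2 = r + 1 := by rw [hrdef]; ring
  rw [hexp]
  rcases le_or_gt (|s|) M with hsM | hsM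
  · have h1 : |s| ^ (r + 1) ≤ M ^ (r + 1) :=
      Real.rpow_le_rpow (abs_nonneg s) hsM (by positivity)
    have h2 : (a / (r + 1)) * |s| ^ (r + 1) ≤ (a / (r + 1)) * M ^ (r + 1) :=
      mul_le_mul_of_nonneg_left h1 (by positivity)
    have := abs_nonneg (φ s)
    linarith
  · rcases le_or_gt 0 s with hs0 | hs0
    · have hsabs : |s| = s := abs_of_nonneg hs0
      have hMs : M ≤ s := by rw [← hsabs]; exact hsM.le
      have hlb : ∀ t, M ≤ t → a * t ^ r ≤ g t := by
        intro t ht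
        have habs : |t| = t := abs_of_nonneg (le_trans hM0.le ht)
        have := hglb t (by rwa [habs])
        rwa [habs] at this
      have hmain := aux_growth g hgc hg0 r a M hr0 ha0 hM0 hlb s hMs
      have hφs : φ s = ∫ t in (0:ℝ)..s, g t := hφ s
      have habsφ : φ s ≤ |φ s| := le_abs_self _
      rw [hsabs]
      have : a * (s ^ (r + 1) - M ^ (r + 1)) / (r + 1)
          = (a / (r + 1)) * s ^ (r + 1) - (a / (r + 1)) * M ^ (r + 1) := by ring
      linarith [this ▸ hmain]
    · have hsabs : |s| = -s := abs_of_neg hs0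
      have hMs : M ≤ -s := by rw [← hsabs]; exact hsM.le
      set g' : ℝ → ℝ := fun t => g (-t) with hg'def
      have hg'c : Continuous g' := hgc.comp continuous_neg
      have hg'0 : ∀ t, 0 ≤ g' t := fun t => hg0 _
      have hlb : ∀ t, M ≤ t → a * t ^ r ≤ g' t := by
        intro t ht
        have ht0 : 0 ≤ t := le_trans hM0.le ht
        have habs : |(-t)| = t := by rw [abs_neg, abs_of_nonneg ht0]
        have := hglb (-t) (by rwa [habs])
        rwa [habs] at this
      have hmain := aux_growth g' hg'c hg'0 r a M hr0 ha0 hM0 hlb (-s) hMs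
      have hrefl : (∫ t in (0:ℝ)..(-s), g' t) = ∫ t in s..(0:ℝ), g t := by
        rw [hg'def]
        rw [intervalIntegral.integral_comp_neg g]
        norm_num
      have hsym : (∫ t in s..(0:ℝ), g t) = -(∫ t in (0:ℝ)..s, g t) :=
        intervalIntegral.integral_symm 0 s
      have hφs : φ s = ∫ t in (0:ℝ)..s, g t := hφ s
      have habsφ : -φ s ≤ |φ s| := neg_le_abs _
      rw [hsabs]
      have : a * ((-s) ^ (r + 1) - M ^ (r + 1)) / (r + 1)
          = (a / (r + 1)) * (-s) ^ (r + 1) - (a / (r + 1)) * M ^ (r + 1) := by ring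
      linarith [this ▸ hmain, hrefl ▸ hmain]
end

section
/- Let φ : ℝ → ℝ be C¹ with φ' (s) = √(2 min{f(s), h(s)}) where 0 ≤ min{f,h} ≤ f pointwise and f continuous. Then for every g ∈ H¹(Ω) and ε > 0, the total variation of φ∘g satisfies ∫_Ω ‖∇(φ∘g)‖ dx ≤ ∫_Ω ( (1/ε) f(g) + (ε/2)‖∇g‖² ) dx = I_ε[g]. -/
open MeasureTheory

/-- for `φ` with `φ'(s) = √(2 min{f(s), h(s)})` and `g ∈ H¹(Ω)`,
the total variation of `φ∘g` is bounded by the Cahn–Hilliard energy: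
`∫_Ω ‖∇(φ∘g)‖ ≤ ∫_Ω ((1/ε) f(g) + (ε/2)‖∇g‖²) = I_ε[g]`. -/
theorem stmt_12 {N : ℕ} (Ω : Set (EuclideanSpace ℝ (Fin N)))
    (hΩo : IsOpen Ω) (hΩb : Bornology.IsBounded Ω)
    (f h : ℝ → ℝ) (hf : Continuous f) (hh : Continuous h)
    (hfnn : ∀ s, 0 ≤ f s) (hhnn : ∀ s, 0 ≤ h s)
    (φ : ℝ → ℝ) (hφ : ∀ s : ℝ, HasDerivAt φ (Real.sqrt (2 * min (f s) (h s))) s)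
    (g : EuclideanSpace ℝ (Fin N) → ℝ) (hg : Differentiable ℝ g)
    (hint1 : IntegrableOn (fun x => f (g x)) Ω)
    (hint2 : IntegrableOn (fun x => ‖fderiv ℝ g x‖ ^ 2) Ω)
    (ε : ℝ) (hε : 0 < ε) :
    ∫ x in Ω, ‖fderiv ℝ (fun y => φ (g y)) x‖ ≤
      ∫ x in Ω, ((1 / ε) * f (g x) + (ε / 2) * ‖fderiv ℝ g x‖ ^ 2) := by
  have hRHS : IntegrableOn
      (fun x => (1 / ε) * f (g x) + (ε / 2) * ‖fderiv ℝ g x‖ ^ 2) Ω :=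
    (hint1.const_mul _).add (hint2.const_mul _)
  apply integral_mono_of_nonneg
  · filter_upwards with x using norm_nonneg _
  · exact hRHS
  · filter_upwards with x
    -- compute the derivative of the composition
    have hcomp : HasFDerivAt (fun y => φ (g y))
        (Real.sqrt (2 * min (f (g x)) (h (g x))) • fderiv ℝ g x) x := by
      have := (hφ (g x)).hasFDerivAt.comp x (hg x).hasFDerivAt
      refine this.congr_fderiv ?_
      ext v
      simp [mul_comm]
    have hnorm : ‖fderiv ℝ (fun y => φ (g y)) x‖ =
        Real.sqrt (2 * min (f (g x)) (h (g x))) * ‖fderiv ℝ g x‖ := by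
      rw [hcomp.fderiv, norm_smul, Real.norm_eq_abs,
        abs_of_nonneg (Real.sqrt_nonneg _)]
    rw [hnorm]
    set a := f (g x) with ha
    set b := ‖fderiv ℝ g x‖ with hb
    have hbnn : 0 ≤ b := norm_nonneg _
    have h1 : Real.sqrt (2 * min a (h (g x))) ≤ Real.sqrt (2 * a) := by
      apply Real.sqrt_le_sqrt
      have := min_le_left a (h (g x))
      nlinarith
    have h2 : Real.sqrt (2 * a) * b ≤ (1 / ε) * a + (ε / 2) * b ^ 2 := by
      have hs : Real.sqrt (2 * a) ^ 2 = 2 * a :=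
        Real.sq_sqrt (by nlinarith [hfnn (g x)])
      have hinv : ε * (1 / ε) = 1 := mul_one_div_cancel hε.ne'
      nlinarith [sq_nonneg (Real.sqrt (2 * a) - ε * b), Real.sqrt_nonneg (2 * a),
        mul_pos hε hε]
    calc Real.sqrt (2 * min a (h (g x))) * b ≤ Real.sqrt (2 * a) * b :=
          mul_le_mul_of_nonneg_right h1 hbnn
      _ ≤ _ := h2
end

section
/- Let Ω ⊂ ℝᴺ be open bounded, c ∈ L¹(Ω), u_ε ∈ H²(Ω) ∩ H¹(Ω), μ_ε ∈ H¹(Ω), f ∈ C¹(ℝ), ε > 0, and suppose μ_ε = -εΔu_ε + (1/ε) f'(u_ε) a.e. in Ω with ∂_n u_ε = 0 on ∂Ω. Then for every Ψ ∈ C¹(Ω̄; ℝᴺ) with Ψ·n = 0 on ∂Ω: ∫_Ω [ ((ε/2)‖∇u_ε‖² + (1/ε) f(u_ε)) I − ε ∇u_ε ⊗ ∇u_ε ] : ∇Ψ dx = ∫_Ω div(μ_ε Ψ) u_ε dx. -/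
open MeasureTheory
open scoped RealInnerProductSpace

section Stmt18Helpers

variable {X : Type*} [NormedAddCommGroup X] [NormedSpace ℝ X] {x v : X}

private lemma fdmul {φ ψ : X → ℝ} (hφ : DifferentiableAt ℝ φ x) (hψ : DifferentiableAt ℝ ψ x) :
    fderiv ℝ (fun y => φ y * ψ y) x v = fderiv ℝ φ x v * ψ x + φ x * fderiv ℝ ψ x v := by
  rw [fderiv_fun_mul hφ hψ]; simp; ring

private lemma fdadd {φ ψ : X → ℝ} (hφ : DifferentiableAt ℝ φ x) (hψ : DifferentiableAt ℝ ψ x) :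
    fderiv ℝ (fun y => φ y + ψ y) x v = fderiv ℝ φ x v + fderiv ℝ ψ x v := by
  rw [fderiv_fun_add hφ hψ]; simp

private lemma fdsub {φ ψ : X → ℝ} (hφ : DifferentiableAt ℝ φ x) (hψ : DifferentiableAt ℝ ψ x) :
    fderiv ℝ (fun y => φ y - ψ y) x v = fderiv ℝ φ x v - fderiv ℝ ψ x v := by
  rw [fderiv_fun_sub hφ hψ]; simp

private lemma fdconstmul {φ : X → ℝ} (hφ : DifferentiableAt ℝ φ x) (c : ℝ) :
    fderiv ℝ (fun y => c * φ y) x v = c * fderiv ℝ φ x v := by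
  rw [fderiv_const_mul hφ c]; simp

private lemma fdsum {ι : Type*} [Fintype ι] {φ : ι → X → ℝ}
    (h : ∀ i, DifferentiableAt ℝ (φ i) x) :
    fderiv ℝ (fun y => ∑ i, φ i y) x v = ∑ i, fderiv ℝ (φ i) x v := by
  rw [fderiv_fun_sum fun i _ => h i]; simp

private lemma fdcomp {f : ℝ → ℝ} {φ : X → ℝ}
    (hf : DifferentiableAt ℝ f (φ x)) (hφ : DifferentiableAt ℝ φ x) :
    fderiv ℝ (fun y => f (φ y)) x v = deriv f (φ x) * fderiv ℝ φ x v := by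
  rw [show (fun y => f (φ y)) = f ∘ φ from rfl,
    (hf.hasDerivAt.comp_hasFDerivAt x hφ.hasFDerivAt).fderiv]; simp

end Stmt18Helpers

/-- The auxiliary vector field used in the Luckhaus–Modica stress-tensor argument. -/
noncomputable def stmt18F {N : ℕ} (u μ : EuclideanSpace ℝ (Fin N) → ℝ)
    (Ψ : EuclideanSpace ℝ (Fin N) → EuclideanSpace ℝ (Fin N)) (f : ℝ → ℝ) (ε : ℝ)
    (y : EuclideanSpace ℝ (Fin N)) : EuclideanSpace ℝ (Fin N) :=
  WithLp.toLp 2 <| fun i =>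
    (ε / 2 * (∑ k, fderiv ℝ u y (EuclideanSpace.single k (1 : ℝ)) ^ 2) + 1 / ε * f (u y)) * Ψ y i
      - (ε * ∑ j, Ψ y j * fderiv ℝ u y (EuclideanSpace.single j (1 : ℝ))) *
          fderiv ℝ u y (EuclideanSpace.single i (1 : ℝ))
      - μ y * u y * Ψ y i

/-- The purely algebraic identity behind the stress-tensor computation. -/
private lemma stmt18_key {n : ℕ} (ε : ℝ) (G Ψx Dμ : Fin n → ℝ) (P H : Fin n → Fin n → ℝ)
    (M U fp fu : ℝ) (hsym : ∀ i j, H i j = H j i)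
    (hM : M = -ε * (∑ i, H i i) + 1 / ε * fp) :
    ∑ i, ((ε / 2 * (∑ k, (H i k * G k + G k * H i k)) + 1 / ε * (fp * G i)) * Ψx i
        + (ε / 2 * (∑ k, G k ^ 2) + 1 / ε * fu) * P i i
        - ((ε * ∑ j, (P i j * G j + Ψx j * H i j)) * G i
            + (ε * ∑ j, Ψx j * G j) * H i i)
        - ((Dμ i * U + M * G i) * Ψx i + M * U * P i i))
      = ((ε / 2 * (∑ i, G i ^ 2) + 1 / ε * fu) * (∑ i, P i i)
          - ε * ∑ i, ∑ j, G i * G j * P i j)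
        - (∑ i, (Dμ i * Ψx i + M * P i i)) * U := by
  have step1 : ∀ i : Fin n,
      (ε / 2 * (∑ k, (H i k * G k + G k * H i k)) + 1 / ε * (fp * G i)) * Ψx i
        + (ε / 2 * (∑ k, G k ^ 2) + 1 / ε * fu) * P i i
        - ((ε * ∑ j, (P i j * G j + Ψx j * H i j)) * G i
            + (ε * ∑ j, Ψx j * G j) * H i i)
        - ((Dμ i * U + M * G i) * Ψx i + M * U * P i i)
      = ((ε / 2 * (∑ k, G k ^ 2) + 1 / ε * fu) * P i i
            - ε * (∑ j, G i * G j * P i j)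
            - (Dμ i * Ψx i + M * P i i) * U)
        + ε * ((∑ k, G k * H i k) * Ψx i - (∑ j, Ψx j * H i j) * G i)
        + ((1 / ε * fp - M) * (G i * Ψx i) - ε * (∑ j, Ψx j * G j) * H i i) := by
    intro i
    have h2 : ∑ j, (P i j * G j + Ψx j * H i j)
        = (∑ j, G j * P i j) + ∑ j, Ψx j * H i j := by
      rw [Finset.sum_add_distrib]
      congr 1
      exact Finset.sum_congr rfl fun j _ => mul_comm _ _
    have h3 : ∑ j, G i * G j * P i j = G i * ∑ j, G j * P i j := by
      rw [Finset.mul_sum]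
      exact Finset.sum_congr rfl fun j _ => by ring
    have h4 : ∑ k, (H i k * G k + G k * H i k) = 2 * ∑ k, G k * H i k := by
      rw [Finset.mul_sum]
      exact Finset.sum_congr rfl fun k _ => by ring
    rw [h2, h3, h4]
    ring
  rw [Finset.sum_congr rfl fun i _ => step1 i, Finset.sum_add_distrib, Finset.sum_add_distrib]
  have hc1 : ∑ i, ε * ((∑ k, G k * H i k) * Ψx i - (∑ j, Ψx j * H i j) * G i) = 0 := by
    have : ∑ i, (∑ k, G k * H i k) * Ψx i = ∑ i, (∑ j, Ψx j * H i j) * G i := by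
      have l1 : ∑ i, (∑ k, G k * H i k) * Ψx i = ∑ i, ∑ k, G k * H i k * Ψx i := by
        exact Finset.sum_congr rfl fun i _ => Finset.sum_mul ..
      have l2 : ∑ i, (∑ j, Ψx j * H i j) * G i = ∑ i, ∑ j, Ψx j * H i j * G i := by
        exact Finset.sum_congr rfl fun i _ => Finset.sum_mul ..
      rw [l1, l2, Finset.sum_comm (f := fun i j => Ψx j * H i j * G i)]
      exact Finset.sum_congr rfl fun i _ => Finset.sum_congr rfl fun k _ => by
        rw [hsym k i]; ring
    simp [this, ← Finset.mul_sum, sub_eq_zero, this]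
  have hc2 : ∑ i, ((1 / ε * fp - M) * (G i * Ψx i) - ε * (∑ j, Ψx j * G j) * H i i) = 0 := by
    have hM' : 1 / ε * fp - M = ε * ∑ i, H i i := by rw [hM]; ring
    rw [Finset.sum_sub_distrib, ← Finset.mul_sum, ← Finset.mul_sum, hM']
    have : ∑ i, G i * Ψx i = ∑ j, Ψx j * G j :=
      Finset.sum_congr rfl fun i _ => mul_comm _ _
    rw [this]; ring
  rw [hc1, hc2, add_zero, add_zero]
  rw [Finset.sum_sub_distrib, Finset.sum_sub_distrib, ← Finset.mul_sum, ← Finset.mul_sum,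
    ← Finset.sum_mul]

/-- the approximate Gibbs–Thomson / stress-tensor identity
(Luckhaus–Modica): if `μ = -εΔu + (1/ε)f'(u)` in `Ω` with homogeneous Neumann
boundary condition `∂_n u = 0`, then for every tangential test field `Ψ`,
`∫_Ω [((ε/2)‖∇u‖² + (1/ε)f(u)) I - ε ∇u ⊗ ∇u] : ∇Ψ = ∫_Ω div(μΨ) u`.
The divergence theorem on `Ω` (valid for `C²` domains) is encoded as the
hypothesis `hdiv`. -/
theorem stmt_18 {N : ℕ}
    (Ω : Set (EuclideanSpace ℝ (Fin N))) (hΩo : IsOpen Ω)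
    (hΩb : Bornology.IsBounded Ω)
    (u μ : EuclideanSpace ℝ (Fin N) → ℝ)
    (Ψ nrm : EuclideanSpace ℝ (Fin N) → EuclideanSpace ℝ (Fin N))
    (f : ℝ → ℝ) (hf : ContDiff ℝ 1 f) (ε : ℝ) (hε : 0 < ε)
    (hu : ContDiff ℝ 2 u) (hμ : ContDiff ℝ 1 μ) (hΨ : ContDiff ℝ 1 Ψ)
    (hEL : ∀ x ∈ Ω, μ x =
      -ε * (∑ i, fderiv ℝ (fun y => fderiv ℝ u y (EuclideanSpace.single i (1:ℝ))) x
        (EuclideanSpace.single i (1:ℝ))) + (1 / ε) * deriv f (u x))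
    (hNeumann : ∀ x ∈ frontier Ω, fderiv ℝ u x (nrm x) = 0)
    (hΨtang : ∀ x ∈ frontier Ω, ⟪Ψ x, nrm x⟫ = 0)
    (hdiv : ∀ F : EuclideanSpace ℝ (Fin N) → EuclideanSpace ℝ (Fin N),
      ContDiff ℝ 1 F → (∀ x ∈ frontier Ω, ⟪F x, nrm x⟫ = 0) →
      (∫ x in Ω, ∑ i, fderiv ℝ (fun y => F y i) x (EuclideanSpace.single i (1:ℝ))) = 0) :
    ∫ x in Ω,
        (((ε / 2) * (∑ i, (fderiv ℝ u x (EuclideanSpace.single i (1:ℝ))) ^ 2)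
            + (1 / ε) * f (u x)) *
          (∑ i, fderiv ℝ (fun y => Ψ y i) x (EuclideanSpace.single i (1:ℝ)))
        - ε * ∑ i, ∑ j,
            (fderiv ℝ u x (EuclideanSpace.single i (1:ℝ))) *
            (fderiv ℝ u x (EuclideanSpace.single j (1:ℝ))) *
            (fderiv ℝ (fun y => Ψ y j) x (EuclideanSpace.single i (1:ℝ)))) =
      ∫ x in Ω, (∑ i, fderiv ℝ (fun y => μ y * Ψ y i) x (EuclideanSpace.single i (1:ℝ))) * u x := by
    classical
  have hu1 : ContDiff ℝ 1 u := hu.of_le one_le_two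
  have hgC : ∀ i : Fin N,
      ContDiff ℝ 1 (fun y => fderiv ℝ u y (EuclideanSpace.single i (1:ℝ))) :=
    fun i => (hu.fderiv_right le_rfl).clm_apply contDiff_const
  have hΨC : ∀ i : Fin N, ContDiff ℝ 1 (fun y => Ψ y i) := fun i => contDiff_euclidean.mp hΨ i
  have hfuC : ContDiff ℝ 1 (fun y => f (u y)) := hf.comp hu1
  have hSC : ContDiff ℝ 1
      (fun y => ∑ k, fderiv ℝ u y (EuclideanSpace.single k (1:ℝ)) ^ 2) :=
    ContDiff.sum fun k _ => (hgC k).pow 2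
  have hAC : ContDiff ℝ 1 (fun y =>
      ε / 2 * (∑ k, fderiv ℝ u y (EuclideanSpace.single k (1:ℝ)) ^ 2) + 1 / ε * f (u y)) :=
    (contDiff_const.mul hSC).add (contDiff_const.mul hfuC)
  have hBC : ContDiff ℝ 1 (fun y =>
      ε * ∑ j, Ψ y j * fderiv ℝ u y (EuclideanSpace.single j (1:ℝ))) :=
    contDiff_const.mul (ContDiff.sum fun j _ => (hΨC j).mul (hgC j))
  have hmC : ContDiff ℝ 1 (fun y => μ y * u y) := hμ.mul hu1
  have hFC : ContDiff ℝ 1 (stmt18F u μ Ψ f ε) := by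
    apply contDiff_euclidean.mpr
    intro i
    exact ((hAC.mul (hΨC i)).sub (hBC.mul (hgC i))).sub (hmC.mul (hΨC i))
  have hud : ∀ x, DifferentiableAt ℝ u x := fun x => hu1.differentiable one_ne_zero x
  have hgd : ∀ (i : Fin N) x,
      DifferentiableAt ℝ (fun y => fderiv ℝ u y (EuclideanSpace.single i (1:ℝ))) x :=
    fun i x => (hgC i).differentiable one_ne_zero x
  have hΨd : ∀ (i : Fin N) x, DifferentiableAt ℝ (fun y => Ψ y i) x :=
    fun i x => (hΨC i).differentiable one_ne_zero x
  have hμd : ∀ x, DifferentiableAt ℝ μ x := fun x => hμ.differentiable one_ne_zero x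
  have hsymm : ∀ (x : EuclideanSpace ℝ (Fin N)) (i j : Fin N),
      fderiv ℝ (fun y => fderiv ℝ u y (EuclideanSpace.single j (1:ℝ))) x
          (EuclideanSpace.single i (1:ℝ))
        = fderiv ℝ (fun y => fderiv ℝ u y (EuclideanSpace.single i (1:ℝ))) x
          (EuclideanSpace.single j (1:ℝ)) := by
    intro x i j
    have h1 : ∀ (v w : EuclideanSpace ℝ (Fin N)),
        fderiv ℝ (fun y => fderiv ℝ u y w) x v = fderiv ℝ (fderiv ℝ u) x v w := by
      intro v w
      rw [fderiv_clm_apply ((hu.fderiv_right le_rfl).differentiable one_ne_zero x)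
        (differentiableAt_const w)]
      simp
    rw [h1, h1]
    exact (hu.contDiffAt.isSymmSndFDerivAt minSmoothness_of_isRCLikeNormedField.le) _ _
  -- pointwise derivative of the components of F
  have hDF : ∀ (x : EuclideanSpace ℝ (Fin N)) (i : Fin N),
      fderiv ℝ (fun y => stmt18F u μ Ψ f ε y i) x (EuclideanSpace.single i (1:ℝ))
      = (ε / 2 * (∑ k,
            (fderiv ℝ (fun y => fderiv ℝ u y (EuclideanSpace.single k (1:ℝ))) x
                (EuclideanSpace.single i (1:ℝ)) * fderiv ℝ u x (EuclideanSpace.single k (1:ℝ))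
              + fderiv ℝ u x (EuclideanSpace.single k (1:ℝ)) *
                fderiv ℝ (fun y => fderiv ℝ u y (EuclideanSpace.single k (1:ℝ))) x
                  (EuclideanSpace.single i (1:ℝ))))
          + 1 / ε * (deriv f (u x) * fderiv ℝ u x (EuclideanSpace.single i (1:ℝ)))) * Ψ x i
        + (ε / 2 * (∑ k, fderiv ℝ u x (EuclideanSpace.single k (1:ℝ)) ^ 2)
            + 1 / ε * f (u x)) *
            fderiv ℝ (fun y => Ψ y i) x (EuclideanSpace.single i (1:ℝ))
        - ((ε * ∑ j,
              (fderiv ℝ (fun y => Ψ y j) x (EuclideanSpace.single i (1:ℝ)) *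
                  fderiv ℝ u x (EuclideanSpace.single j (1:ℝ))
                + Ψ x j * fderiv ℝ (fun y => fderiv ℝ u y (EuclideanSpace.single j (1:ℝ))) x
                    (EuclideanSpace.single i (1:ℝ)))) *
              fderiv ℝ u x (EuclideanSpace.single i (1:ℝ))
            + (ε * ∑ j, Ψ x j * fderiv ℝ u x (EuclideanSpace.single j (1:ℝ))) *
              fderiv ℝ (fun y => fderiv ℝ u y (EuclideanSpace.single i (1:ℝ))) x
                (EuclideanSpace.single i (1:ℝ)))
        - ((fderiv ℝ μ x (EuclideanSpace.single i (1:ℝ)) * u x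
              + μ x * fderiv ℝ u x (EuclideanSpace.single i (1:ℝ))) * Ψ x i
            + μ x * u x * fderiv ℝ (fun y => Ψ y i) x (EuclideanSpace.single i (1:ℝ))) := by
    intro x i
    have dA : DifferentiableAt ℝ (fun y =>
        ε / 2 * (∑ k, fderiv ℝ u y (EuclideanSpace.single k (1:ℝ)) ^ 2) + 1 / ε * f (u y)) x :=
      hAC.differentiable one_ne_zero x
    have dB : DifferentiableAt ℝ (fun y =>
        ε * ∑ j, Ψ y j * fderiv ℝ u y (EuclideanSpace.single j (1:ℝ))) x :=
      hBC.differentiable one_ne_zero x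
    have dm : DifferentiableAt ℝ (fun y => μ y * u y) x := hmC.differentiable one_ne_zero x
    have dAΨ : DifferentiableAt ℝ (fun y =>
        (ε / 2 * (∑ k, fderiv ℝ u y (EuclideanSpace.single k (1:ℝ)) ^ 2) + 1 / ε * f (u y))
          * Ψ y i) x := dA.mul (hΨd i x)
    have dBg : DifferentiableAt ℝ (fun y =>
        (ε * ∑ j, Ψ y j * fderiv ℝ u y (EuclideanSpace.single j (1:ℝ))) *
          fderiv ℝ u y (EuclideanSpace.single i (1:ℝ))) x := dB.mul (hgd i x)
    have dmΨ : DifferentiableAt ℝ (fun y => μ y * u y * Ψ y i) x := dm.mul (hΨd i x)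
    have dS : DifferentiableAt ℝ
        (fun y => ∑ k, fderiv ℝ u y (EuclideanSpace.single k (1:ℝ)) ^ 2) x :=
      hSC.differentiable one_ne_zero x
    have dfu : DifferentiableAt ℝ (fun y => f (u y)) x := hfuC.differentiable one_ne_zero x
    have dSB : DifferentiableAt ℝ
        (fun y => ∑ j, Ψ y j * fderiv ℝ u y (EuclideanSpace.single j (1:ℝ))) x :=
      (ContDiff.sum fun j (_ : j ∈ Finset.univ) => (hΨC j).mul (hgC j)).differentiable one_ne_zero x
    have hsq : ∀ k : Fin N,
        fderiv ℝ (fun y => fderiv ℝ u y (EuclideanSpace.single k (1:ℝ)) ^ 2) x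
            (EuclideanSpace.single i (1:ℝ))
          = fderiv ℝ (fun y => fderiv ℝ u y (EuclideanSpace.single k (1:ℝ))) x
              (EuclideanSpace.single i (1:ℝ)) * fderiv ℝ u x (EuclideanSpace.single k (1:ℝ))
            + fderiv ℝ u x (EuclideanSpace.single k (1:ℝ)) *
              fderiv ℝ (fun y => fderiv ℝ u y (EuclideanSpace.single k (1:ℝ))) x
                (EuclideanSpace.single i (1:ℝ)) := by
      intro k
      have hrw : (fun y => fderiv ℝ u y (EuclideanSpace.single k (1:ℝ)) ^ 2)
          = fun y => fderiv ℝ u y (EuclideanSpace.single k (1:ℝ)) *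
              fderiv ℝ u y (EuclideanSpace.single k (1:ℝ)) := by
        funext y; ring
      rw [hrw, fdmul (hgd k x) (hgd k x)]
    simp only [stmt18F, PiLp.toLp_apply]
    rw [fdsub (dAΨ.fun_sub dBg) dmΨ, fdsub dAΨ dBg, fdmul dA (hΨd i x), fdmul dB (hgd i x),
      fdmul dm (hΨd i x), fdmul (hμd x) (hud x),
      fdadd ((differentiableAt_const (ε / 2)).fun_mul dS) ((differentiableAt_const (1 / ε)).fun_mul dfu),
      fdconstmul dS (ε / 2), fdconstmul dfu (1 / ε),
      fdcomp ((hf.differentiable one_ne_zero) (u x)) (hud x),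
      fdsum (fun k => ((hgC k).pow 2).differentiable one_ne_zero x),
      fdconstmul dSB ε,
      fdsum (fun j => ((hΨC j).mul (hgC j)).differentiable one_ne_zero x),
      Finset.sum_congr rfl fun k _ => hsq k,
      Finset.sum_congr rfl fun j (_ : j ∈ Finset.univ) => fdmul (hΨd j x) (hgd j x)]
  -- pointwise identity on Ω
  have hpt : ∀ x ∈ Ω,
      (((ε / 2) * (∑ i, (fderiv ℝ u x (EuclideanSpace.single i (1:ℝ))) ^ 2)
            + (1 / ε) * f (u x)) *
          (∑ i, fderiv ℝ (fun y => Ψ y i) x (EuclideanSpace.single i (1:ℝ)))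
        - ε * ∑ i, ∑ j,
            (fderiv ℝ u x (EuclideanSpace.single i (1:ℝ))) *
            (fderiv ℝ u x (EuclideanSpace.single j (1:ℝ))) *
            (fderiv ℝ (fun y => Ψ y j) x (EuclideanSpace.single i (1:ℝ))))
        - (∑ i, fderiv ℝ (fun y => μ y * Ψ y i) x (EuclideanSpace.single i (1:ℝ))) * u x
      = ∑ i, fderiv ℝ (fun y => stmt18F u μ Ψ f ε y i) x (EuclideanSpace.single i (1:ℝ)) := by
    intro x hx
    have hkey := stmt18_key (n := N) ε
      (fun i => fderiv ℝ u x (EuclideanSpace.single i (1:ℝ)))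
      (fun i => Ψ x i)
      (fun i => fderiv ℝ μ x (EuclideanSpace.single i (1:ℝ)))
      (fun i j => fderiv ℝ (fun y => Ψ y j) x (EuclideanSpace.single i (1:ℝ)))
      (fun i j => fderiv ℝ (fun y => fderiv ℝ u y (EuclideanSpace.single j (1:ℝ))) x
        (EuclideanSpace.single i (1:ℝ)))
      (μ x) (u x) (deriv f (u x)) (f (u x)) (fun i j => hsymm x i j) (hEL x hx)
    rw [Finset.sum_congr rfl fun i _ => hDF x i]
    refine Eq.trans ?_ hkey.symm
    have hexp : ∀ i : Fin N,
        fderiv ℝ (fun y => μ y * Ψ y i) x (EuclideanSpace.single i (1:ℝ))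
          = fderiv ℝ μ x (EuclideanSpace.single i (1:ℝ)) * Ψ x i
            + μ x * fderiv ℝ (fun y => Ψ y i) x (EuclideanSpace.single i (1:ℝ)) :=
      fun i => fdmul (hμd x) (hΨd i x)
    rw [Finset.sum_congr rfl fun i (_ : i ∈ Finset.univ) => hexp i]
  -- tangency of F on the boundary
  have hFt : ∀ x ∈ frontier Ω, ⟪stmt18F u μ Ψ f ε x, nrm x⟫ = 0 := by
    intro x hx
    have hΨn : ∑ i, Ψ x i * nrm x i = 0 := by
      have h := hΨtang x hx
      simpa [PiLp.inner_apply, RCLike.inner_apply, mul_comm] using h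
    have hgn : ∑ i, fderiv ℝ u x (EuclideanSpace.single i (1:ℝ)) * nrm x i = 0 := by
      have hrepr : nrm x = ∑ i, nrm x i • EuclideanSpace.single i (1:ℝ) := by
        have hb := (EuclideanSpace.basisFun (Fin N) ℝ).sum_repr (nrm x)
        simp only [EuclideanSpace.basisFun_repr, EuclideanSpace.basisFun_apply] at hb
        exact hb.symm
      have h0 := hNeumann x hx
      rw [hrepr, map_sum] at h0
      simp only [_root_.map_smul, smul_eq_mul] at h0
      have hcomm : ∑ i, fderiv ℝ u x (EuclideanSpace.single i (1:ℝ)) * nrm x i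
          = ∑ i, nrm x i * fderiv ℝ u x (EuclideanSpace.single i (1:ℝ)) :=
        Finset.sum_congr rfl fun i _ => mul_comm _ _
      rw [hcomm]
      exact h0
    have hin : ⟪stmt18F u μ Ψ f ε x, nrm x⟫ = ∑ i, stmt18F u μ Ψ f ε x i * nrm x i := by
      simp [PiLp.inner_apply, RCLike.inner_apply, mul_comm]
    rw [hin]
    have expand : ∀ i : Fin N, stmt18F u μ Ψ f ε x i * nrm x i
        = (ε / 2 * (∑ k, fderiv ℝ u x (EuclideanSpace.single k (1:ℝ)) ^ 2) + 1 / ε * f (u x))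
              * (Ψ x i * nrm x i)
          - (ε * ∑ j, Ψ x j * fderiv ℝ u x (EuclideanSpace.single j (1:ℝ)))
              * (fderiv ℝ u x (EuclideanSpace.single i (1:ℝ)) * nrm x i)
          - μ x * u x * (Ψ x i * nrm x i) := fun i => by simp only [stmt18F, PiLp.toLp_apply]; ring
    rw [Finset.sum_congr rfl fun i _ => expand i, Finset.sum_sub_distrib, Finset.sum_sub_distrib,
      ← Finset.mul_sum, ← Finset.mul_sum, ← Finset.mul_sum, hΨn, hgn]
    ring
  -- continuity of the integrands
  have hgc : ∀ i : Fin N, Continuous fun x => fderiv ℝ u x (EuclideanSpace.single i (1:ℝ)) :=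
    fun i => (hgC i).continuous
  have hPc : ∀ i j : Fin N, Continuous fun x =>
      fderiv ℝ (fun y => Ψ y j) x (EuclideanSpace.single i (1:ℝ)) := by
    intro i j
    exact ((((hΨC j).fderiv_right (m := 0) (by norm_num)).clm_apply contDiff_const).continuous :)
  have hμΨc : ∀ i : Fin N, Continuous fun x =>
      fderiv ℝ (fun y => μ y * Ψ y i) x (EuclideanSpace.single i (1:ℝ)) := by
    intro i
    exact ((((hμ.mul (hΨC i)).fderiv_right (m := 0) (by norm_num)).clm_apply contDiff_const).continuous :)
  have hLc : Continuous fun x =>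
      (((ε / 2) * (∑ i, (fderiv ℝ u x (EuclideanSpace.single i (1:ℝ))) ^ 2)
            + (1 / ε) * f (u x)) *
          (∑ i, fderiv ℝ (fun y => Ψ y i) x (EuclideanSpace.single i (1:ℝ)))
        - ε * ∑ i, ∑ j,
            (fderiv ℝ u x (EuclideanSpace.single i (1:ℝ))) *
            (fderiv ℝ u x (EuclideanSpace.single j (1:ℝ))) *
            (fderiv ℝ (fun y => Ψ y j) x (EuclideanSpace.single i (1:ℝ)))) := by
    refine Continuous.sub ?_ (continuous_const.mul ?_)
    · exact ((continuous_const.mul (continuous_finset_sum _ fun i _ =>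
        (hgc i).pow 2)).add (continuous_const.mul hfuC.continuous)).mul
        (continuous_finset_sum _ fun i _ => hPc i i)
    · exact continuous_finset_sum _ fun i _ => continuous_finset_sum _ fun j _ =>
        ((hgc i).mul (hgc j)).mul (hPc i j)
  have hRc : Continuous fun x =>
      (∑ i, fderiv ℝ (fun y => μ y * Ψ y i) x (EuclideanSpace.single i (1:ℝ))) * u x :=
    (continuous_finset_sum _ fun i _ => hμΨc i).mul hu1.continuous
  have hLint : IntegrableOn (fun x =>
      (((ε / 2) * (∑ i, (fderiv ℝ u x (EuclideanSpace.single i (1:ℝ))) ^ 2)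
            + (1 / ε) * f (u x)) *
          (∑ i, fderiv ℝ (fun y => Ψ y i) x (EuclideanSpace.single i (1:ℝ)))
        - ε * ∑ i, ∑ j,
            (fderiv ℝ u x (EuclideanSpace.single i (1:ℝ))) *
            (fderiv ℝ u x (EuclideanSpace.single j (1:ℝ))) *
            (fderiv ℝ (fun y => Ψ y j) x (EuclideanSpace.single i (1:ℝ))))) Ω volume :=
    (hLc.continuousOn.integrableOn_compact hΩb.isCompact_closure).mono_set subset_closure
  have hRint : IntegrableOn (fun x =>
      (∑ i, fderiv ℝ (fun y => μ y * Ψ y i) x (EuclideanSpace.single i (1:ℝ))) * u x) Ω volume :=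
    (hRc.continuousOn.integrableOn_compact hΩb.isCompact_closure).mono_set subset_closure
  have h0 : (∫ x in Ω, ∑ i, fderiv ℝ (fun y => stmt18F u μ Ψ f ε y i) x
      (EuclideanSpace.single i (1:ℝ))) = 0 := hdiv _ hFC hFt
  rw [← sub_eq_zero, ← integral_sub hLint hRint,
    setIntegral_congr_fun hΩo.measurableSet (fun x hx => hpt x hx), h0]
end
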